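/- arXiv:2308.09235 — 2 statements merged into one kernel-verified Lean document; each statement's English description precedes it below -/
import Mathlib

section
/- Fix real numbers λ > 0, a, b, L > 0 and k with |k| < 1. If β ∈ ℝ and F_{a,b,λ,k,L}(i·β) = 0, then β = 0. -/
/-- The branch `η(σ)` of the square root of `((λ+1)²σ² − 4λab)/(4λ²)` given by the principal
complex power; its square is always `((λ+1)²σ² − 4λab)/(4λ²)`. -/
noncomputable def charEta (lam a b : ℝ) (σ : ℂ) : ℂ :=
  ((((lam : ℂ) + 1) ^ 2 * σ ^ 2 - 4 * (lam : ℂ) * a * b) / (4 * (lam : ℂ) ^ 2)) ^ ((1 : ℂ) / 2)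

open Classical in
/-- The characteristic function `F_{a,b,λ,k,L}(σ) = (k−1)cosh(ηL) −
((k+1)((λ+1)/(2λ))σ + (kb/λ + a))·sinh(ηL)/η`, with `sinh(ηL)/η` interpreted as `L` when
`η = 0`.  The value does not depend on the choice of the square root `η`. -/
noncomputable def Fchar (lam a b k L : ℝ) (σ : ℂ) : ℂ :=
  ((k : ℂ) - 1) * Complex.cosh (charEta lam a b σ * L) -
    (((k : ℂ) + 1) * (((lam : ℂ) + 1) / (2 * (lam : ℂ))) * σ + ((k : ℂ) * b / lam + a)) *
      (if charEta lam a b σ = 0 then (L : ℂ)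
       else Complex.sinh (charEta lam a b σ * L) / charEta lam a b σ)

/-!
On the imaginary axis `η² = -((λ+1)²β² + 4λab)/(4λ²)` is real, so `conj η = ±η`; since
`cosh (ηL)` and `sinh (ηL)/η` are even in `η` and commute with conjugation, both are real numbers
`C` and `S`. The imaginary part of `F(iβ)` is then `-(k+1)(λ+1)/(2λ) · β S`, so `β S = 0`.
If `S = 0`, then `C² = C² - η² S² = 1` while the real part gives `(k-1) C = 0`, impossible for
`k ≠ 1`; hence `β = 0`.
-/

open ComplexConjugate

namespace Complex

theorem conj_eq_or_eq_neg_of_sq_eq_ofReal {z : ℂ} {w : ℝ} (hz : z ^ 2 = w) :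
    conj z = z ∨ conj z = -z :=
  sq_eq_sq_iff_eq_or_eq_neg.mp (by rw [← map_pow, hz, conj_ofReal])

theorem conj_apply_eq_of_sq_eq_ofReal {f : ℂ → ℂ} (heven : ∀ z, f (-z) = f z)
    (hconj : ∀ z, f (conj z) = conj (f z)) {z : ℂ} {w : ℝ} (hz : z ^ 2 = w) :
    conj (f z) = f z := by
  rw [← hconj]
  rcases conj_eq_or_eq_neg_of_sq_eq_ofReal hz with h | h <;> rw [h]
  exact heven z

end Complex

open Complex

open Classical in
noncomputable def sinhDiv (L : ℝ) (η : ℂ) : ℂ :=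
  if η = 0 then (L : ℂ) else sinh (η * L) / η

theorem sinhDiv_neg (L : ℝ) (η : ℂ) : sinhDiv L (-η) = sinhDiv L η := by
  simp only [sinhDiv, neg_eq_zero, neg_mul, sinh_neg, neg_div_neg_eq]

theorem sinhDiv_conj (L : ℝ) (η : ℂ) : sinhDiv L (conj η) = conj (sinhDiv L η) := by
  simp only [sinhDiv, map_eq_zero]
  split_ifs
  · rw [conj_ofReal]
  · rw [map_div₀, ← sinh_conj, map_mul, conj_ofReal]

theorem cosh_sq_sub_sq_mul_sinhDiv_sq (L : ℝ) (η : ℂ) :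
    cosh (η * L) ^ 2 - η ^ 2 * sinhDiv L η ^ 2 = 1 := by
  by_cases hη : η = 0
  · simp [hη]
  · rw [sinhDiv, if_neg hη, ← mul_pow, mul_div_cancel₀ _ hη, cosh_sq_sub_sinh_sq]

theorem exists_ofReal_cosh_mul_ofReal (L : ℝ) {η : ℂ} {w : ℝ} (hη : η ^ 2 = w) :
    ∃ C : ℝ, cosh (η * L) = C :=
  conj_eq_iff_real.mp <| conj_apply_eq_of_sq_eq_ofReal (f := fun η ↦ cosh (η * L))
    (fun z ↦ by simp only [neg_mul, cosh_neg])
    (fun z ↦ by simp only [← cosh_conj, map_mul, conj_ofReal]) hη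

theorem exists_ofReal_sinhDiv (L : ℝ) {η : ℂ} {w : ℝ} (hη : η ^ 2 = w) :
    ∃ S : ℝ, sinhDiv L η = S :=
  conj_eq_iff_real.mp <| conj_apply_eq_of_sq_eq_ofReal (sinhDiv_neg L) (sinhDiv_conj L) hη

theorem Fchar_eq (lam a b k L : ℝ) (σ : ℂ) :
    Fchar lam a b k L σ = (k - 1) * cosh (charEta lam a b σ * L) -
      ((k + 1) * ((lam + 1) / (2 * lam)) * σ + (k * b / lam + a)) *
        sinhDiv L (charEta lam a b σ) :=
  rfl

theorem charEta_sq (lam a b : ℝ) (σ : ℂ) :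
    charEta lam a b σ ^ 2 = ((lam + 1) ^ 2 * σ ^ 2 - 4 * lam * a * b) / (4 * lam ^ 2) := by
  rw [charEta, one_div, cpow_ofNat_inv_pow]

theorem charEta_I_mul_sq (lam a b β : ℝ) :
    charEta lam a b (I * β) ^ 2 =
      ((-(lam + 1) ^ 2 * β ^ 2 - 4 * lam * a * b) / (4 * lam ^ 2) : ℝ) := by
  rw [charEta_sq]
  push_cast [mul_pow, I_sq]
  ring

theorem stmt_9_general (lam a b L k : ℝ) (hlam : 0 < lam) (hk : |k| < 1)
    (β : ℝ) (h : Fchar lam a b k L (Complex.I * (β : ℂ)) = 0) : β = 0 := by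
  set η := charEta lam a b (I * β)
  obtain ⟨C, hC⟩ := exists_ofReal_cosh_mul_ofReal L (charEta_I_mul_sq lam a b β)
  obtain ⟨S, hS⟩ := exists_ofReal_sinhDiv L (charEta_I_mul_sq lam a b β)
  have hF : (((k - 1) * C - (k * b / lam + a) * S : ℝ) : ℂ)
      - (((k + 1) * ((lam + 1) / (2 * lam)) * (β * S) : ℝ) : ℂ) * I = 0 := by
    rw [← h, Fchar_eq, hC, hS]
    push_cast
    ring
  have him := congrArg im hF
  have hre := congrArg re hF
  simp only [sub_im, sub_re, mul_im, mul_re, ofReal_re, ofReal_im, I_re, I_im, zero_im,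
    zero_re] at him hre
  have hk1 := abs_lt.mp hk
  have hS0 : S ≠ 0 := by
    rintro rfl
    have hC2 : C ^ 2 = 1 := by
      have := cosh_sq_sub_sq_mul_sinhDiv_sq L η
      rw [hC, hS, ofReal_zero, zero_pow two_ne_zero, mul_zero, sub_zero] at this
      exact_mod_cast this
    have hC0 : C = 0 := by
      have : (k - 1) * C = 0 := by simpa using hre
      exact (mul_eq_zero.mp this).resolve_left (by linarith)
    simp [hC0] at hC2
  have hcoeff : (k + 1) * ((lam + 1) / (2 * lam)) ≠ 0 := by
    have : 0 < k + 1 := by linarith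
    positivity
  have hβS : (k + 1) * ((lam + 1) / (2 * lam)) * (β * S) = 0 := by linarith
  exact (mul_eq_zero.mp ((mul_eq_zero.mp hβS).resolve_left hcoeff)).resolve_right hS0

/-- For `λ > 0`, `L > 0` and `|k| < 1`, the only possible purely imaginary
zero of `F_{a,b,λ,k,L}` is `σ = 0`. -/
theorem stmt_9 (lam a b L k : ℝ) (hlam : 0 < lam) (hL : 0 < L) (hk : |k| < 1)
    (β : ℝ) (h : Fchar lam a b k L (Complex.I * (β : ℂ)) = 0) : β = 0 :=
  stmt_9_general lam a b L k hlam hk β h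
end

section
/- Fix real numbers λ > 0 and a < 0, b < 0. For k ∈ (−1,1), let θ₀(k) be the unique θ ∈ (0, π) with (k−1)·√(ab/λ)·cos(θ) = (k·b/λ + a)·sin(θ). Then the function k ↦ θ₀(k) is strictly decreasing on (−1,1), and sup{θ₀(k) : k ∈ (−1,1)} = θ*, where θ* is the unique θ ∈ (0, π) with cos(θ)·2√(λab) = (b − λa)·sin(θ). Consequently, the supremum over k ∈ (−1,1) of the smallest positive L with F_{a,b,λ,k,L}(0) = 0 equals √(λ/(ab))·θ*. -/
/-!
On `(0, π)` the equation `p cos θ = q sin θ` with `p ≠ 0` says `cot θ = q / p`, so its only solution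
is `arccot (q / p)`. Hence `θ₀(k) = arccot c(k)` with `c(k) = (kb/λ + a) / ((k - 1)√(ab/λ))`, a
Möbius function of `k` that increases on `k < 1` because `b/λ + a < 0`. So `θ₀` decreases, and its
supremum over `(-1, 1)` is the limit `arccot c(-1)`, which is `θ*`. At `σ = 0` one has
`η = ± i ω` with `ω = √(ab/λ)`, so `F(0) = (k - 1) cos(ωL) - (kb/λ + a) sin(ωL) / ω`, whose first
positive zero is `θ₀(k) / ω`.
-/

open Real Set Pointwise

noncomputable def arccot (x : ℝ) : ℝ := π / 2 - arctan x

lemma arccot_mem_Ioo (x : ℝ) : arccot x ∈ Ioo 0 π := by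
  unfold arccot
  constructor <;> linarith [arctan_lt_pi_div_two x, neg_pi_div_two_lt_arctan x]

lemma strictAnti_arccot : StrictAnti arccot :=
  fun _ _ h => sub_lt_sub_left (arctan_strictMono h) _

lemma continuous_arccot : Continuous arccot := by
  unfold arccot; fun_prop

lemma cos_eq_mul_sin_iff_eq_arccot {θ x : ℝ} (hθ : θ ∈ Ioo 0 π) :
    cos θ = x * sin θ ↔ θ = arccot x := by
  refine ⟨fun h => ?_, ?_⟩
  · have htan : tan (π / 2 - θ) = x := by
      rw [tan_pi_div_two_sub, tan_eq_sin_div_cos, inv_div, h,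
        mul_div_cancel_right₀ _ (sin_pos_of_pos_of_lt_pi hθ.1 hθ.2).ne']
    have := arctan_tan (x := π / 2 - θ) (by linarith [hθ.2]) (by linarith [hθ.1])
    rw [arccot, ← htan, this]
    ring
  · rintro rfl
    rw [arccot, cos_pi_div_two_sub, sin_pi_div_two_sub, sin_arctan, cos_arctan]
    ring

lemma mul_cos_eq_mul_sin_iff_eq_arccot {θ p q : ℝ} (hθ : θ ∈ Ioo 0 π) (hp : p ≠ 0) :
    p * cos θ = q * sin θ ↔ θ = arccot (q / p) := by
  rw [← cos_eq_mul_sin_iff_eq_arccot hθ, div_mul_eq_mul_div, eq_div_iff hp, mul_comm]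

lemma isLeast_pos_mul_cos_eq_mul_sin {ω p q : ℝ} (hω : 0 < ω) (hp : p ≠ 0) :
    IsLeast {L | 0 < L ∧ p * cos (ω * L) = q * sin (ω * L)} (arccot (q / p) / ω) := by
  have hθ := arccot_mem_Ioo (q / p)
  refine ⟨⟨div_pos hθ.1 hω, ?_⟩, ?_⟩
  · rw [mul_div_cancel₀ _ hω.ne', mul_cos_eq_mul_sin_iff_eq_arccot hθ hp]
  · rintro L ⟨hL, hzero⟩
    by_contra! hlt
    have hωL : ω * L < arccot (q / p) := by rwa [lt_div_iff₀' hω] at hlt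
    have := (mul_cos_eq_mul_sin_iff_eq_arccot ⟨mul_pos hω hL, hωL.trans hθ.2⟩ hp).1 hzero
    linarith

lemma strictMonoOn_mul_add_div_sub_one_mul {c a ω : ℝ} (hca : c + a < 0) (hω : 0 < ω) :
    StrictMonoOn (fun k => (k * c + a) / ((k - 1) * ω)) (Iio 1) := by
  intro k₁ hk₁ k₂ hk₂ h
  have hd₁ : (k₁ - 1) * ω < 0 := mul_neg_of_neg_of_pos (by linarith [mem_Iio.1 hk₁]) hω
  have hd₂ : (k₂ - 1) * ω < 0 := mul_neg_of_neg_of_pos (by linarith [mem_Iio.1 hk₂]) hω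
  dsimp only
  rw [← neg_div_neg_eq, ← neg_div_neg_eq (k₂ * c + a),
    div_lt_div_iff₀ (neg_pos.2 hd₁) (neg_pos.2 hd₂)]
  nlinarith [mul_pos (mul_pos (sub_pos.2 h) (neg_pos.2 hca)) hω]

lemma AntitoneOn.isLUB_image_Ioo {α β : Type*} [LinearOrder α] [TopologicalSpace α]
    [OrderTopology α] [DenselyOrdered α] [Preorder β] [TopologicalSpace β] [OrderClosedTopology β]
    {f : α → β} {a b : α} (hab : a < b) (hf : AntitoneOn f (Ioo a b)) (hfa : ContinuousAt f a) :
    IsLUB (f '' Ioo a b) (f a) :=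
  (isGLB_Ioo hab).isLUB_of_tendsto hf (nonempty_Ioo.2 hab)
    (hfa.tendsto.mono_left nhdsWithin_le_nhds)

lemma cosh_mul_and_sinh_mul_div_of_sq_eq {η ω : ℂ} (h : η ^ 2 = (Complex.I * ω) ^ 2)
    (z : ℂ) : Complex.cosh (η * z) = Complex.cos (ω * z) ∧
      Complex.sinh (η * z) / η = Complex.sin (ω * z) / ω := by
  have hI : Complex.I * ω * z = ω * z * Complex.I := by ring
  rcases sq_eq_sq_iff_eq_or_eq_neg.1 h with rfl | rfl
  · rw [hI, Complex.cosh_mul_I, Complex.sinh_mul_I, mul_comm Complex.I ω,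
      mul_div_mul_right _ _ Complex.I_ne_zero]
    exact ⟨rfl, rfl⟩
  · rw [neg_mul, Complex.cosh_neg, Complex.sinh_neg, neg_div_neg_eq, hI,
      Complex.cosh_mul_I, Complex.sinh_mul_I, mul_comm Complex.I ω,
      mul_div_mul_right _ _ Complex.I_ne_zero]
    exact ⟨rfl, rfl⟩

section

variable {lam a b : ℝ}

lemma charEta_zero_sq (hlam : 0 < lam) (hab : 0 < a * b) :
    charEta lam a b 0 ^ 2 = (Complex.I * (√(a * b / lam) : ℝ)) ^ 2 := by
  have hω : (√(a * b / lam) : ℂ) ^ 2 = a * b / lam := by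
    exact_mod_cast sq_sqrt (div_pos hab hlam).le
  rw [charEta, show (1 : ℂ) / 2 = ((2 : ℕ) : ℂ)⁻¹ by norm_num,
    Complex.cpow_nat_inv_pow _ two_ne_zero, mul_pow, Complex.I_sq, hω]
  have hlamC : (lam : ℂ) ≠ 0 := Complex.ofReal_ne_zero.2 hlam.ne'
  field_simp
  ring

lemma Fchar_zero (hlam : 0 < lam) (hab : 0 < a * b) (k L : ℝ) :
    Fchar lam a b k L 0 = (((k - 1) * cos (√(a * b / lam) * L) -
      (k * b / lam + a) * sin (√(a * b / lam) * L) / √(a * b / lam) : ℝ) : ℂ) := by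
  have hω : (√(a * b / lam) : ℂ) ≠ 0 :=
    Complex.ofReal_ne_zero.2 (sqrt_pos.2 (div_pos hab hlam)).ne'
  have hsq := charEta_zero_sq hlam hab
  have hη : charEta lam a b 0 ≠ 0 := by
    intro h
    rw [h, zero_pow two_ne_zero, eq_comm, pow_eq_zero_iff two_ne_zero] at hsq
    exact mul_ne_zero Complex.I_ne_zero hω hsq
  obtain ⟨hcosh, hsinh⟩ := cosh_mul_and_sinh_mul_div_of_sq_eq hsq L
  rw [Fchar, if_neg hη, hcosh, hsinh]
  push_cast
  ring

lemma Fchar_zero_eq_zero_iff (hlam : 0 < lam) (hab : 0 < a * b) (k L : ℝ) :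
    Fchar lam a b k L 0 = 0 ↔ (k - 1) * √(a * b / lam) * cos (√(a * b / lam) * L) =
      (k * b / lam + a) * sin (√(a * b / lam) * L) := by
  rw [Fchar_zero hlam hab, Complex.ofReal_eq_zero, sub_eq_zero,
    eq_div_iff (sqrt_pos.2 (div_pos hab hlam)).ne', mul_right_comm]

/-- `cot θ₀(k)`, read off from the equation `(k - 1) √(ab/λ) cos θ = (kb/λ + a) sin θ`. -/
noncomputable def marginalCot (lam a b k : ℝ) : ℝ :=
  (k * b / lam + a) / ((k - 1) * √(a * b / lam))

lemma strictMonoOn_marginalCot (hlam : 0 < lam) (ha : a < 0) (hb : b < 0) :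
    StrictMonoOn (marginalCot lam a b) (Iio 1) := by
  have hω : 0 < √(a * b / lam) := sqrt_pos.2 (div_pos (mul_pos_of_neg_of_neg ha hb) hlam)
  have hmono := strictMonoOn_mul_add_div_sub_one_mul
    (by linarith [div_neg_of_neg_of_pos hb hlam] : b / lam + a < 0) hω
  simp only [← mul_div_assoc] at hmono
  exact hmono

lemma continuousAt_marginalCot (hlam : 0 < lam) (hab : 0 < a * b) {k : ℝ} (hk : k ≠ 1) :
    ContinuousAt (marginalCot lam a b) k :=
  ContinuousAt.div (by fun_prop) (by fun_prop)
    (mul_ne_zero (sub_ne_zero.2 hk) (sqrt_pos.2 (div_pos hab hlam)).ne')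

lemma marginalCot_neg_one (hlam : 0 < lam) :
    marginalCot lam a b (-1) = (b - lam * a) / (2 * √(lam * a * b)) := by
  rw [marginalCot, show lam * a * b = lam ^ 2 * (a * b / lam) by field_simp,
    sqrt_mul (sq_nonneg lam), sqrt_sq hlam.le]
  field_simp
  ring

lemma isLeast_pos_zeros_Fchar_zero (hlam : 0 < lam) (hab : 0 < a * b) {k : ℝ} (hk : k < 1) :
    IsLeast {L | 0 < L ∧ Fchar lam a b k L 0 = 0}
      (arccot (marginalCot lam a b k) / √(a * b / lam)) := by
  have hω : 0 < √(a * b / lam) := sqrt_pos.2 (div_pos hab hlam)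
  simp_rw [Fchar_zero_eq_zero_iff hlam hab]
  exact isLeast_pos_mul_cos_eq_mul_sin hω (mul_ne_zero (by linarith) hω.ne')

end

/-- For `λ > 0`, `a < 0`, `b < 0`, the marginal angle `θ₀(k)` (the unique
`θ ∈ (0,π)` with `(k−1)√(ab/λ)cos θ = (kb/λ+a)sin θ`) is strictly decreasing in `k ∈ (−1,1)`
with supremum `θ*`, the unique `θ ∈ (0,π)` with `cos θ · 2√(λab) = (b−λa)·sin θ`;
consequently the supremum over `k ∈ (−1,1)` of the smallest positive `L` with
`F_{a,b,λ,k,L}(0) = 0` equals `√(λ/(ab))·θ*`. -/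
theorem stmt_14 (lam a b : ℝ) (hlam : 0 < lam) (ha : a < 0) (hb : b < 0)
    (θ₀ : ℝ → ℝ)
    (hθ : ∀ k ∈ Set.Ioo (-1 : ℝ) 1, θ₀ k ∈ Set.Ioo 0 Real.pi ∧
      (k - 1) * Real.sqrt (a * b / lam) * Real.cos (θ₀ k) =
        (k * b / lam + a) * Real.sin (θ₀ k)) :
    StrictAntiOn θ₀ (Set.Ioo (-1 : ℝ) 1) ∧
    (∃! θs : ℝ, θs ∈ Set.Ioo 0 Real.pi ∧
      Real.cos θs * (2 * Real.sqrt (lam * a * b)) = (b - lam * a) * Real.sin θs) ∧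
    (∀ θs : ℝ, θs ∈ Set.Ioo 0 Real.pi →
      Real.cos θs * (2 * Real.sqrt (lam * a * b)) = (b - lam * a) * Real.sin θs →
      sSup (θ₀ '' Set.Ioo (-1 : ℝ) 1) = θs ∧
      sSup ((fun k => sInf {L : ℝ | 0 < L ∧ Fchar lam a b k L 0 = 0}) '' Set.Ioo (-1 : ℝ) 1) =
        Real.sqrt (lam / (a * b)) * θs) := by
  have hab : 0 < a * b := mul_pos_of_neg_of_neg ha hb
  have hω : 0 < √(a * b / lam) := sqrt_pos.2 (div_pos hab hlam)
  have hθ₀ : EqOn θ₀ (arccot ∘ marginalCot lam a b) (Ioo (-1) 1) := fun k hk =>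
    (mul_cos_eq_mul_sin_iff_eq_arccot (hθ k hk).1 (mul_ne_zero (by linarith [hk.2]) hω.ne')).1
      (hθ k hk).2
  have hanti : StrictAntiOn (arccot ∘ marginalCot lam a b) (Ioo (-1) 1) :=
    strictAnti_arccot.comp_strictMonoOn
      ((strictMonoOn_marginalCot hlam ha hb).mono Ioo_subset_Iio_self)
  have hθstar : ∀ θ ∈ Ioo 0 π, (cos θ * (2 * √(lam * a * b)) = (b - lam * a) * sin θ ↔
      θ = arccot (marginalCot lam a b (-1))) := fun θ hθ => by
    have hlab : 0 < lam * a * b := by rw [mul_assoc]; exact mul_pos hlam hab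
    rw [mul_comm, mul_cos_eq_mul_sin_iff_eq_arccot hθ (mul_pos two_pos (sqrt_pos.2 hlab)).ne',
      marginalCot_neg_one hlam]
  have hlub : IsLUB (θ₀ '' Ioo (-1) 1) (arccot (marginalCot lam a b (-1))) :=
    hθ₀.image_eq ▸ hanti.antitoneOn.isLUB_image_Ioo (by norm_num)
      (continuous_arccot.continuousAt.comp (continuousAt_marginalCot hlam hab (by norm_num)))
  have hzeros : (fun k => sInf {L : ℝ | 0 < L ∧ Fchar lam a b k L 0 = 0}) '' Ioo (-1) 1 =
      (√(a * b / lam))⁻¹ • (θ₀ '' Ioo (-1) 1) := by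
    rw [← image_smul, image_image]
    refine image_congr fun k hk => ?_
    rw [(isLeast_pos_zeros_Fchar_zero hlam hab hk.2).csInf_eq, hθ₀ hk, smul_eq_mul, div_eq_inv_mul,
      Function.comp_apply]
  refine ⟨hanti.congr hθ₀.symm, ⟨_, ⟨arccot_mem_Ioo _, (hθstar _ (arccot_mem_Ioo _)).2 rfl⟩,
      fun θ h => (hθstar θ h.1).1 h.2⟩, fun θs hθs hθs_eq => ?_⟩
  rw [(hθstar θs hθs).1 hθs_eq, hzeros, Real.sSup_smul_of_nonneg (inv_nonneg.2 hω.le),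
    hlub.csSup_eq ((nonempty_Ioo.2 (by norm_num)).image _), ← sqrt_inv, inv_div]
  exact ⟨rfl, rfl⟩
end
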